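/- arXiv:2605.09435 — 6 statements merged into one kernel-verified Lean document; each statement's English description precedes it below -/
import Mathlib

section
/- Let A ⊆ Θ_p be unrestrained and let (c,D) ∈ Θ_p. Then there exists (a,B) ∈ A such that a ∉ D, c ∉ B, and the set A' = (A \ {(a,B)}) ∪ {(a,D),(c,B)} is also unrestrained. -/
def Theta (Atoms : Type*) (p : ℕ) : Set (Atoms × Finset Atoms) :=
  {ab | ab.2.card = p ∧ ab.1 ∉ ab.2}

def Restrains {Atoms : Type*} (zW : Atoms × Finset Atoms)
    (A : Set (Atoms × Finset Atoms)) : Prop :=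
  ∀ ab ∈ A, ab.1 ∈ zW.2 ∨ zW.1 ∈ ab.2

def Unrestrained {Atoms : Type*} (p : ℕ) (A : Set (Atoms × Finset Atoms)) : Prop :=
  ∀ zW ∈ Theta Atoms p, ¬ Restrains zW A

private lemma exists_witness {Atoms : Type*} {p : ℕ} {A : Set (Atoms × Finset Atoms)}
    (hU : Unrestrained p A) {z : Atoms} {W : Finset Atoms}
    (h : (z, W) ∈ Theta Atoms p) :
    ∃ ab ∈ A, ab.1 ∉ W ∧ z ∉ ab.2 := by
  have h2 := hU (z, W) h
  unfold Restrains at h2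
  push_neg at h2
  simpa using h2

private lemma superset_unrestrained {Atoms : Type*} {p : ℕ} {A : Set (Atoms × Finset Atoms)}
    (hU : Unrestrained p A) (c : Atoms) (B D : Finset Atoms) (_hB : (c, B) ∈ A) :
    Unrestrained p ((A \ {(c, B)}) ∪ ({(c, D), (c, B)} : Set (Atoms × Finset Atoms))) := by
  intro zW hzW hres
  apply hU zW hzW
  intro ab hab
  apply hres
  by_cases h : ab = (c, B)
  · right; right; simp [h]
  · exact Or.inl ⟨hab, h⟩

theorem unrestrained_insert {Atoms : Type*} [Infinite Atoms] (p : ℕ) (hp : 0 < p)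
    (A : Set (Atoms × Finset Atoms)) (hA : A ⊆ Theta Atoms p)
    (hU : Unrestrained p A)
    (c : Atoms) (D : Finset Atoms) (hcD : (c, D) ∈ Theta Atoms p) :
    ∃ a B, (a, B) ∈ A ∧ a ∉ D ∧ c ∉ B ∧
      Unrestrained p ((A \ {(a, B)}) ∪ {(a, D), (c, B)}) := by
  classical
  obtain ⟨⟨a, B⟩, habA, haD, hcB⟩ := exists_witness hU hcD
  simp only at haD hcB
  by_cases hac : a = c
  · subst hac
    exact ⟨a, B, habA, haD, hcB, superset_unrestrained hU a B D habA⟩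
  by_cases hgood : Unrestrained p ((A \ {(a, B)}) ∪ {(a, D), (c, B)})
  · exact ⟨a, B, habA, haD, hcB, hgood⟩
  -- extract a restrainer (z, W) of A'
  unfold Unrestrained at hgood
  push_neg at hgood
  obtain ⟨⟨z, W⟩, hzW, hres⟩ := hgood
  -- the witness of A for (z,W) must be (a,B)
  obtain ⟨⟨a0, B0⟩, h0A, h0W, h0z⟩ := exists_witness hU hzW
  simp only at h0W h0z
  have heq : (a0, B0) = (a, B) := by
    by_contra hne
    have hmem : ((a0, B0) : Atoms × Finset Atoms) ∈
        (A \ {(a, B)}) ∪ ({(a, D), (c, B)} : Set (Atoms × Finset Atoms)) :=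
      Or.inl ⟨h0A, hne⟩
    rcases hres _ hmem with h | h
    · exact h0W h
    · exact h0z h
  have haW : a ∉ W := by rw [Prod.mk.injEq] at heq; rw [← heq.1]; exact h0W
  have hzB : z ∉ B := by rw [Prod.mk.injEq] at heq; rw [← heq.2]; exact h0z
  -- from the new pairs: z ∈ D and c ∈ W
  have hzD : z ∈ D := by
    have : ((a, D) : Atoms × Finset Atoms) ∈
        (A \ {(a, B)}) ∪ ({(a, D), (c, B)} : Set (Atoms × Finset Atoms)) := by
      right; left; rfl
    rcases hres _ this with h | h
    · exact absurd h haW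
    · exact h
  have hcW : c ∈ W := by
    have : ((c, B) : Atoms × Finset Atoms) ∈
        (A \ {(a, B)}) ∪ ({(a, D), (c, B)} : Set (Atoms × Finset Atoms)) := by
      right; right; rfl
    rcases hres _ this with h | h
    · exact h
    · exact absurd h hzB
  have hza : z ≠ a := fun h => haD (h ▸ hzD)
  obtain ⟨hWcard, hzWmem⟩ := hzW
  simp only at hWcard hzWmem
  -- the swapped pair (z, insert a (W.erase c)) ∈ Θ_p
  have hW2 : (z, insert a (W.erase c)) ∈ Theta Atoms p := by
    constructor
    · simp only
      rw [Finset.card_insert_of_notMem (fun h => haW (Finset.mem_of_mem_erase h)),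
        Finset.card_erase_of_mem hcW, hWcard]
      omega
    · simp only [Finset.mem_insert, Finset.mem_erase]
      push_neg
      exact ⟨hza, fun _ => hzWmem⟩
  obtain ⟨⟨a1, B1⟩, h1A, h1W, h1z⟩ := exists_witness hU hW2
  simp only [Finset.mem_insert, Finset.mem_erase] at h1W
  push_neg at h1W
  simp only at h1z
  have hne1 : ((a1, B1) : Atoms × Finset Atoms) ≠ (a, B) := by
    intro h
    rw [Prod.mk.injEq] at h
    exact h1W.1 h.1
  have h1mem : ((a1, B1) : Atoms × Finset Atoms) ∈
      (A \ {(a, B)}) ∪ ({(a, D), (c, B)} : Set (Atoms × Finset Atoms)) :=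
    Or.inl ⟨h1A, hne1⟩
  have ha1c : a1 = c := by
    rcases hres _ h1mem with h | h
    · by_contra hne
      exact (h1W.2 hne) h
    · exact absurd h h1z
  subst ha1c
  exact ⟨a1, B1, h1A, hcD.2, (hA h1A).2, superset_unrestrained hU a1 B1 D h1A⟩
end

section
/- If A ⊆ Θ_p is unrestrained, then there exists a subset A' ⊆ A that is unrestrained and has cardinality at most p³ + 2p² + 2p + 1. -/
/-- Core lemma: if no pair with first coordinate `z` lies in `A`, then there is a small
subset of `A` whose first coordinates escape any `p`-set, with `z` avoiding all seconds. -/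
lemma core_witness {Atoms : Type*} [Infinite Atoms] (p : ℕ) (hp : 0 < p)
    (A : Set (Atoms × Finset Atoms)) (hA : A ⊆ Theta Atoms p)
    (hU : Unrestrained p A) (z : Atoms) (hz : ∀ B, (z, B) ∉ A) :
    ∃ T : Finset (Atoms × Finset Atoms), ↑T ⊆ A ∧ T.card ≤ p + 1 ∧
      ∀ W : Finset Atoms, W.card = p → ∃ ab ∈ T, ab.1 ∉ W ∧ z ∉ ab.2 := by
  classical
  set S : Set Atoms := {a | ∃ B, (a, B) ∈ A ∧ z ∉ B} with hS
  by_cases hbig : ∃ F : Finset Atoms, ↑F ⊆ S ∧ F.card = p + 1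
  · obtain ⟨F, hFS, hFcard⟩ := hbig
    have hsel : ∀ a ∈ F, ∃ B, (a, B) ∈ A ∧ z ∉ B := fun a ha => hFS ha
    choose! g hg1 hg2 using hsel
    refine ⟨F.image (fun a => (a, g a)), ?_, ?_, ?_⟩
    · intro ab hab
      simp only [Finset.coe_image, Set.mem_image, Finset.mem_coe] at hab
      obtain ⟨a, ha, rfl⟩ := hab
      exact hg1 a ha
    · calc (F.image (fun a => (a, g a))).card ≤ F.card := Finset.card_image_le
        _ = p + 1 := hFcard
    · intro W hW
      have : ¬ (F ⊆ W) := by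
        intro hsub
        have := Finset.card_le_card hsub
        omega
      obtain ⟨a, haF, haW⟩ := Finset.not_subset.mp this
      exact ⟨(a, g a), Finset.mem_image_of_mem _ haF, haW, hg2 a haF⟩
  · exfalso
    -- S is finite of size ≤ p; cover it by a p-set avoiding z, contradicting unrestraint
    have hSfin : S.Finite := by
      by_contra hinf
      obtain ⟨F, hFS, hFcard⟩ := Set.Infinite.exists_subset_card_eq hinf (p + 1)
      exact hbig ⟨F, hFS, hFcard⟩
    have hScard : S.ncard ≤ p := by
      by_contra hle
      push_neg at hle
      obtain ⟨t, htS, htcard⟩ := Set.exists_subset_card_eq (n := p + 1) hle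
      have htfin : t.Finite := hSfin.subset htS
      refine hbig ⟨htfin.toFinset, ?_, ?_⟩
      · intro a ha; exact htS (htfin.mem_toFinset.mp ha)
      · rw [← Set.ncard_eq_toFinset_card _ htfin]; exact htcard
    have hzS : z ∉ S := by
      rintro ⟨B, hB, -⟩
      exact hz B hB
    -- enlarge S to a p-set inside {z}ᶜ
    have hcompl : ({z}ᶜ : Set Atoms).Infinite := Set.Finite.infinite_compl (Set.finite_singleton z)
    obtain ⟨W', hSW', hW'c, hW'card⟩ :=
      Set.Infinite.exists_superset_ncard_eq hcompl (by simpa using hzS) hSfin hScard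
    have hW'fin : W'.Finite := by
      rcases W'.finite_or_infinite with h | h
      · exact h
      · rw [h.ncard] at hW'card; omega
    set W : Finset Atoms := hW'fin.toFinset with hWdef
    have hWcard : W.card = p := by
      rw [← Set.ncard_eq_toFinset_card _ hW'fin]; exact hW'card
    have hzW : z ∉ W := by
      intro h
      exact hW'c (hW'fin.mem_toFinset.mp h) rfl
    refine hU (z, W) ⟨hWcard, hzW⟩ ?_
    intro ab hab
    by_cases hzB : z ∈ ab.2
    · exact Or.inr hzB
    · left
      have : ab.1 ∈ S := ⟨ab.2, hab, hzB⟩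
      exact hW'fin.mem_toFinset.mpr (hSW' this)

/-- For every `z` there is a small witness set defeating all restrainers with first
coordinate `z`. -/
lemma witness {Atoms : Type*} [Infinite Atoms] (p : ℕ) (hp : 0 < p)
    (A : Set (Atoms × Finset Atoms)) (hA : A ⊆ Theta Atoms p)
    (hU : Unrestrained p A) (z : Atoms) :
    ∃ w : Finset (Atoms × Finset Atoms), ↑w ⊆ A ∧ w.card ≤ p + 1 ∧
      ∀ W : Finset Atoms, W.card = p → z ∉ W → ∃ ab ∈ w, ab.1 ∉ W ∧ z ∉ ab.2 := by
  classical
  by_cases hz : ∃ B, (z, B) ∈ A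
  · obtain ⟨B, hB⟩ := hz
    refine ⟨{(z, B)}, by simpa using hB, by simp, ?_⟩
    intro W hW hzW
    exact ⟨(z, B), Finset.mem_singleton_self _, hzW, (hA hB).2⟩
  · push_neg at hz
    obtain ⟨T, h1, h2, h3⟩ := core_witness p hp A hA hU z hz
    exact ⟨T, h1, h2, fun W hW _ => h3 W hW⟩

/-- The "head" set: `≤ p+1` pairs whose first coordinates cannot all be covered by a `p`-set. -/
lemma head {Atoms : Type*} [Infinite Atoms] (p : ℕ) (hp : 0 < p)
    (A : Set (Atoms × Finset Atoms)) (hA : A ⊆ Theta Atoms p)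
    (hU : Unrestrained p A) :
    ∃ T : Finset (Atoms × Finset Atoms), ↑T ⊆ A ∧ T.card ≤ p + 1 ∧
      ∀ W : Finset Atoms, W.card = p → ∃ ab ∈ T, ab.1 ∉ W := by
  classical
  by_cases h : ∀ z : Atoms, ∃ B, (z, B) ∈ A
  · obtain ⟨F, hFcard⟩ := Finset.exists_subset_card_eq
      (s := (Infinite.exists_subset_card_eq Atoms (p + 1)).choose) (n := p + 1)
      (by rw [(Infinite.exists_subset_card_eq Atoms (p + 1)).choose_spec])
    obtain ⟨F, hFcard⟩ : ∃ F : Finset Atoms, F.card = p + 1 :=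
      Infinite.exists_subset_card_eq Atoms (p + 1)
    choose! g hg using h
    refine ⟨F.image (fun a => (a, g a)), ?_, ?_, ?_⟩
    · intro ab hab
      simp only [Finset.coe_image, Set.mem_image, Finset.mem_coe] at hab
      obtain ⟨a, ha, rfl⟩ := hab
      exact hg a
    · calc (F.image (fun a => (a, g a))).card ≤ F.card := Finset.card_image_le
        _ = p + 1 := hFcard
    · intro W hW
      have : ¬ (F ⊆ W) := by
        intro hsub
        have := Finset.card_le_card hsub
        omega
      obtain ⟨a, haF, haW⟩ := Finset.not_subset.mp this
      exact ⟨(a, g a), Finset.mem_image_of_mem _ haF, haW⟩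
  · push_neg at h
    obtain ⟨z, hz⟩ := h
    obtain ⟨T, h1, h2, h3⟩ := core_witness p hp A hA hU z hz
    exact ⟨T, h1, h2, fun W hW => (h3 W hW).imp (fun ab hab => ⟨hab.1, hab.2.1⟩)⟩

theorem unrestrained_small_subset {Atoms : Type*} [Infinite Atoms] (p : ℕ) (hp : 0 < p)
    (A : Set (Atoms × Finset Atoms)) (hA : A ⊆ Theta Atoms p)
    (hU : Unrestrained p A) :
    ∃ A' ⊆ A, Unrestrained p A' ∧ A'.Finite ∧
      A'.ncard ≤ p ^ 3 + 2 * p ^ 2 + 2 * p + 1 := by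
  classical
  obtain ⟨T, hTA, hTcard, hThead⟩ := head p hp A hA hU
  choose w hwA hwcard hwprop using witness p hp A hA hU
  set Z : Finset Atoms := T.biUnion (fun ab => ab.2) with hZdef
  set A'f : Finset (Atoms × Finset Atoms) := T ∪ Z.biUnion w with hA'def
  refine ⟨↑A'f, ?_, ?_, A'f.finite_toSet, ?_⟩
  · intro ab hab
    rcases Finset.mem_union.mp hab with h | h
    · exact hTA h
    · obtain ⟨z, hzZ, habw⟩ := Finset.mem_biUnion.mp h
      exact hwA z habw
  · rintro ⟨z, W⟩ ⟨hWcard, hzW⟩ hres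
    by_cases hzZ : z ∈ Z
    · obtain ⟨ab, habw, hab1, hab2⟩ := hwprop z W hWcard hzW
      have habA' : ab ∈ A'f := Finset.mem_union_right _
        (Finset.mem_biUnion.mpr ⟨z, hzZ, habw⟩)
      rcases hres ab habA' with h | h
      · exact hab1 h
      · exact hab2 h
    · obtain ⟨ab, habT, hab1⟩ := hThead W hWcard
      have hzab2 : z ∉ ab.2 := fun h => hzZ (Finset.mem_biUnion.mpr ⟨ab, habT, h⟩)
      rcases hres ab (Finset.mem_union_left _ habT) with h | h
      · exact hab1 h
      · exact hzab2 h
  · have hZcard : Z.card ≤ (p + 1) * p := by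
      calc Z.card ≤ ∑ ab ∈ T, ab.2.card := Finset.card_biUnion_le
        _ = ∑ ab ∈ T, p := by
            refine Finset.sum_congr rfl ?_
            intro ab hab
            exact (hA (hTA hab)).1
        _ = T.card * p := by rw [Finset.sum_const, smul_eq_mul]
        _ ≤ (p + 1) * p := Nat.mul_le_mul_right p hTcard
    have hbi : (Z.biUnion w).card ≤ Z.card * (p + 1) := by
      calc (Z.biUnion w).card ≤ ∑ z ∈ Z, (w z).card := Finset.card_biUnion_le
        _ ≤ ∑ z ∈ Z, (p + 1) := Finset.sum_le_sum (fun z _ => hwcard z)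
        _ = Z.card * (p + 1) := by rw [Finset.sum_const, smul_eq_mul]
    rw [Set.ncard_coe_finset]
    calc A'f.card ≤ T.card + (Z.biUnion w).card := Finset.card_union_le _ _
      _ ≤ (p + 1) + Z.card * (p + 1) := by
          have := Nat.mul_le_mul_right (p + 1) hZcard
          omega
      _ ≤ (p + 1) + ((p + 1) * p) * (p + 1) := by
          have := Nat.mul_le_mul_right (p + 1) hZcard
          omega
      _ = p ^ 3 + 2 * p ^ 2 + 2 * p + 1 := by ring
end

section
/- Every nonempty set A ⊆ Θ_p admits a good control (X,Y) with |X| ≤ p and |Y| ≤ binom(p+1, 2). That is, either |X| = p and A ⊆ Y × Atoms^(p) ∪ Atoms × {X}, or |X| < p, every y ∈ Y occurs as the first coordinate of some element of A, and A/(X,Y) is unrestrained (as a subset of Θ_{p−|X|}). -/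
def Controls {Atoms : Type*} (X Y : Finset Atoms) (A : Set (Atoms × Finset Atoms)) : Prop :=
  ∀ ab ∈ A, ab.1 ∈ Y ∨ X ⊆ ab.2

def Reduce {Atoms : Type*} [DecidableEq Atoms] (A : Set (Atoms × Finset Atoms))
    (X Y : Finset Atoms) : Set (Atoms × Finset Atoms) :=
  (fun ab => (ab.1, ab.2 \ X)) '' {ab ∈ A | ab.1 ∉ Y}

lemma good_control_aux {Atoms : Type*} [DecidableEq Atoms] [Infinite Atoms]
    (p : ℕ) (A : Set (Atoms × Finset Atoms)) (hA : A ⊆ Theta Atoms p) :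
    ∀ n (X Y : Finset Atoms), p - X.card = n → X.card ≤ p →
      Y.card + (p - X.card + 1).choose 2 ≤ (p + 1).choose 2 →
      Controls X Y A → (∀ y ∈ Y, ∃ B, (y, B) ∈ A) →
      ∃ X Y : Finset Atoms, X.card ≤ p ∧ Y.card ≤ (p + 1).choose 2 ∧
        Controls X Y A ∧
        ((X.card = p ∧ ∀ ab ∈ A, ab.1 ∈ Y ∨ ab.2 = X) ∨
         (X.card < p ∧ (∀ y ∈ Y, ∃ B, (y, B) ∈ A) ∧
           Unrestrained (p - X.card) (Reduce A X Y))) := by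
  classical
  intro n
  induction n with
  | zero =>
    intro X Y hn hXp hY hC _
    have hXeq : X.card = p := Nat.le_antisymm hXp (Nat.le_of_sub_eq_zero hn)
    refine ⟨X, Y, hXp, ?_, hC, Or.inl ⟨hXeq, ?_⟩⟩
    · simpa [hn] using hY
    · intro ab hab
      rcases hC ab hab with h | h
      · exact Or.inl h
      · refine Or.inr ?_
        have hcard : ab.2.card ≤ X.card := by
          rw [hXeq, (hA hab).1]
        exact (Finset.eq_of_subset_of_card_le h hcard).symm
  | succ n ih =>
    intro X Y hn hXp hY hC hW
    have hk : X.card < p := by omega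
    by_cases h : Unrestrained (p - X.card) (Reduce A X Y)
    · exact ⟨X, Y, hXp, le_trans (Nat.le_add_right _ _) hY, hC,
        Or.inr ⟨hk, hW, h⟩⟩
    · simp only [Unrestrained, not_forall, not_not, exists_prop] at h
      obtain ⟨⟨z, W⟩, hzW, hres⟩ := h
      -- replace z by one not in X if necessary
      obtain ⟨z, hzX, hzW2, hWcard, hres⟩ :
          ∃ z, z ∉ X ∧ z ∉ W ∧ W.card = p - X.card ∧
            Restrains (z, W) (Reduce A X Y) := by
        by_cases hz : z ∈ X
        · obtain ⟨z', hz'⟩ := Infinite.exists_notMem_finset (X ∪ W)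
          refine ⟨z', fun h => hz' (Finset.mem_union_left _ h),
            fun h => hz' (Finset.mem_union_right _ h), hzW.1, ?_⟩
          intro ab hab
          rcases hres ab hab with h | h
          · exact Or.inl h
          · exfalso
            obtain ⟨⟨a, B⟩, ⟨_, _⟩, rfl⟩ := hab
            exact (Finset.mem_sdiff.mp h).2 hz
        · exact ⟨z, hz, hzW.2, hzW.1, hres⟩
      set W₀ : Finset Atoms := W.filter (fun w => ∃ B, (w, B) ∈ A) with hW₀
      set X' := insert z X with hX'
      set Y' := Y ∪ W₀ with hY'
      have hX'card : X'.card = X.card + 1 := Finset.card_insert_of_notMem hzX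
      have hcontrol : Controls X' Y' A := by
        intro ab hab
        by_cases hy : ab.1 ∈ Y'
        · exact Or.inl hy
        · have haY : ab.1 ∉ Y := fun h => hy (Finset.mem_union_left _ h)
          have hXB : X ⊆ ab.2 := (hC ab hab).resolve_left haY
          have hred : (ab.1, ab.2 \ X) ∈ Reduce A X Y := ⟨ab, ⟨hab, haY⟩, rfl⟩
          rcases hres _ hred with h | h
          · exact absurd (Finset.mem_union_right _
              (Finset.mem_filter.mpr ⟨h, ab.2, by simpa using hab⟩)) hy
          · refine Or.inr (Finset.insert_subset (Finset.mem_sdiff.mp h).1 hXB)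
      have hwit : ∀ y ∈ Y', ∃ B, (y, B) ∈ A := by
        intro y hy
        rcases Finset.mem_union.mp hy with h | h
        · exact hW y h
        · exact (Finset.mem_filter.mp h).2
      have hY'card : Y'.card ≤ Y.card + (p - X.card) := by
        calc Y'.card ≤ Y.card + W₀.card := Finset.card_union_le _ _
        _ ≤ Y.card + W.card := by
            exact Nat.add_le_add_left (Finset.card_filter_le _ _) _
        _ = Y.card + (p - X.card) := by rw [hWcard]
      have hbound : Y'.card + (p - X'.card + 1).choose 2 ≤ (p + 1).choose 2 := by
        have h1 : p - X'.card + 1 = p - X.card := by omega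
        have h2 : (p - X.card + 1).choose 2 = (p - X.card) + (p - X.card).choose 2 := by
          rw [Nat.choose_succ_succ, Nat.choose_one_right]
        rw [h1]
        omega
      exact ih X' Y' (by omega) (by omega) hbound hcontrol hwit

theorem good_control_exists {Atoms : Type*} [DecidableEq Atoms] [Infinite Atoms]
    (p : ℕ) (hp : 0 < p)
    (A : Set (Atoms × Finset Atoms)) (hA : A ⊆ Theta Atoms p) (hne : A.Nonempty) :
    ∃ X Y : Finset Atoms, X.card ≤ p ∧ Y.card ≤ (p + 1).choose 2 ∧
      Controls X Y A ∧
      ((X.card = p ∧ ∀ ab ∈ A, ab.1 ∈ Y ∨ ab.2 = X) ∨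
       (X.card < p ∧ (∀ y ∈ Y, ∃ B, (y, B) ∈ A) ∧
         Unrestrained (p - X.card) (Reduce A X Y))) := by
  refine good_control_aux p A hA p ∅ ∅ (by simp) (by simp) (by simp) ?_ (by simp)
  intro ab _
  exact Or.inr (Finset.empty_subset _)
end

section
/- Let A ⊆ Θ_p be controlled by (X,Y), with every y ∈ Y occurring as a first coordinate, and let (a_i, B_i)_{i=1}^N be a sequence of elements from A. If N > (2p+1)(|Y|+1), then there exist indices 1 ≤ i < j ≤ N such that a_i ∉ B_j, a_j ∉ B_i, and moreover either a_i = a_j ∈ Y, or X ⊆ B_i and X ⊆ B_j. -/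
lemma matching_aux {Atoms : Type*} [DecidableEq Atoms] {p N : ℕ}
    (a : Fin N → Atoms) (B : Fin N → Finset Atoms) (s : Finset (Fin N))
    (hcard : 2 * p + 1 < s.card)
    (hB : ∀ i ∈ s, (B i).card = p ∧ a i ∉ B i) :
    ∃ i ∈ s, ∃ j ∈ s, i ≠ j ∧ a i ∉ B j ∧ a j ∉ B i := by
  by_cases hinj : Set.InjOn a s
  · by_contra h
    push_neg at h
    set T : Finset (Fin N × Fin N) := s.offDiag.filter (fun ij => a ij.1 ∈ B ij.2) with hT
    have hsub : s.offDiag ⊆ T ∪ T.image Prod.swap := by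
      intro ij hij
      obtain ⟨hi, hj, hne⟩ := Finset.mem_offDiag.mp hij
      by_cases hc : a ij.1 ∈ B ij.2
      · exact Finset.mem_union_left _ (Finset.mem_filter.mpr ⟨hij, hc⟩)
      · have h2 := h ij.1 hi ij.2 hj hne hc
        refine Finset.mem_union_right _ (Finset.mem_image.mpr ⟨(ij.2, ij.1), ?_, rfl⟩)
        exact Finset.mem_filter.mpr ⟨Finset.mem_offDiag.mpr ⟨hj, hi, hne.symm⟩, h2⟩
    have hTle : T.card ≤ s.card * p := by
      have hsub2 : T ⊆ s.biUnion
          (fun j => ((s.filter (fun i => a i ∈ B j)).image (fun i => (i, j)))) := by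
        intro ij hij
        obtain ⟨hod, hab⟩ := Finset.mem_filter.mp hij
        obtain ⟨hi, hj, hne⟩ := Finset.mem_offDiag.mp hod
        exact Finset.mem_biUnion.mpr ⟨ij.2, hj,
          Finset.mem_image.mpr ⟨ij.1, Finset.mem_filter.mpr ⟨hi, hab⟩, rfl⟩⟩
      calc T.card ≤ _ := Finset.card_le_card hsub2
        _ ≤ ∑ j ∈ s, ((s.filter (fun i => a i ∈ B j)).image (fun i => (i, j))).card :=
            Finset.card_biUnion_le
        _ ≤ ∑ _j ∈ s, p := by
            refine Finset.sum_le_sum fun j hj => ?_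
            refine le_trans Finset.card_image_le ?_
            have hle : (s.filter (fun i => a i ∈ B j)).card ≤ (B j).card := by
              apply Finset.card_le_card_of_injOn a
              · intro i hi; exact (Finset.mem_filter.mp hi).2
              · exact hinj.mono fun i hi => Finset.mem_coe.mpr (Finset.mem_filter.mp hi).1
            rw [(hB j hj).1] at hle; exact hle
        _ = s.card * p := by rw [Finset.sum_const, smul_eq_mul]
    have hod : s.offDiag.card = s.card * s.card - s.card := Finset.offDiag_card s
    have hcount : s.offDiag.card ≤ 2 * T.card := by
      calc s.offDiag.card ≤ (T ∪ T.image Prod.swap).card := Finset.card_le_card hsub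
        _ ≤ T.card + (T.image Prod.swap).card := Finset.card_union_le _ _
        _ ≤ T.card + T.card := by
            exact Nat.add_le_add_left Finset.card_image_le _
        _ = 2 * T.card := by ring
    set m := s.card with hm
    have h1 : m * m - m ≤ 2 * (m * p) := by
      calc m * m - m = s.offDiag.card := hod.symm
        _ ≤ 2 * T.card := hcount
        _ ≤ 2 * (m * p) := by omega
    have h2 : m * (2 * p + 2) ≤ m * m := Nat.mul_le_mul_left m (by omega)
    have h5 : 2 * (m * p) + 2 * m ≤ m * m := by
      calc 2 * (m * p) + 2 * m = m * (2 * p + 2) := by ring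
        _ ≤ m * m := h2
    have h6 : m * m - m + m = m * m :=
      Nat.sub_add_cancel (Nat.le_mul_of_pos_left m (by omega))
    linarith [h1, h5, h6, hcard]
  · unfold Set.InjOn at hinj
    push_neg at hinj
    obtain ⟨i, hi, j, hj, heq, hne⟩ := hinj
    refine ⟨i, Finset.mem_coe.mp hi, j, Finset.mem_coe.mp hj, hne, ?_, ?_⟩
    · rw [heq]; exact (hB j hj).2
    · rw [← heq]; exact (hB i hi).2

theorem controlled_matching {Atoms : Type*} [DecidableEq Atoms] [Infinite Atoms]
    (p N : ℕ) (A : Set (Atoms × Finset Atoms)) (hA : A ⊆ Theta Atoms p)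
    (X Y : Finset Atoms) (hc : Controls X Y A)
    (hY : ∀ y ∈ Y, ∃ B, (y, B) ∈ A)
    (a : Fin N → Atoms) (B : Fin N → Finset Atoms)
    (hmem : ∀ i, (a i, B i) ∈ A)
    (hN : (2 * p + 1) * (Y.card + 1) < N) :
    ∃ i j : Fin N, i < j ∧ a i ∉ B j ∧ a j ∉ B i ∧
      ((a i = a j ∧ a i ∈ Y) ∨ (X ⊆ B i ∧ X ⊆ B j)) := by
  classical
  set f : Fin N → Option Atoms := fun i => if a i ∈ Y then some (a i) else none with hf
  set t : Finset (Option Atoms) := insert none (Y.image some) with ht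
  have hmaps : ∀ i ∈ (Finset.univ : Finset (Fin N)), f i ∈ t := by
    intro i _
    by_cases hy : a i ∈ Y
    · simp only [hf, ht, if_pos hy]
      exact Finset.mem_insert_of_mem (Finset.mem_image_of_mem _ hy)
    · simp [hf, ht, if_neg hy]
  have htcard : t.card ≤ Y.card + 1 := by
    calc t.card ≤ (Y.image some).card + 1 := Finset.card_insert_le _ _
      _ ≤ Y.card + 1 := by exact Nat.add_le_add_right Finset.card_image_le 1
  have hlt : t.card * (2 * p + 1) < (Finset.univ : Finset (Fin N)).card := by
    rw [Finset.card_univ, Fintype.card_fin]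
    calc t.card * (2 * p + 1) ≤ (Y.card + 1) * (2 * p + 1) :=
          Nat.mul_le_mul_right _ htcard
      _ = (2 * p + 1) * (Y.card + 1) := by ring
      _ < N := hN
  obtain ⟨y, _, hy⟩ := Finset.exists_lt_card_fiber_of_mul_lt_card_of_maps_to hmaps hlt
  rcases y with _ | y0
  · -- none case
    set s := Finset.univ.filter (fun i => f i = none) with hs
    have hXB : ∀ i ∈ s, X ⊆ B i := by
      intro i hi
      have hfi := (Finset.mem_filter.mp hi).2
      have hnY : a i ∉ Y := by
        intro hy'
        simp only [hf, if_pos hy'] at hfi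
        cases hfi
      rcases hc _ (hmem i) with h' | h'
      · exact absurd h' hnY
      · exact h'
    obtain ⟨i, hi, j, hj, hne, hij1, hij2⟩ := matching_aux a B s hy
      (fun i _ => ⟨(hA (hmem i)).1, (hA (hmem i)).2⟩)
    rcases lt_or_gt_of_ne hne with hlt' | hlt'
    · exact ⟨i, j, hlt', hij1, hij2, Or.inr ⟨hXB i hi, hXB j hj⟩⟩
    · exact ⟨j, i, hlt', hij2, hij1, Or.inr ⟨hXB j hj, hXB i hi⟩⟩
  · set s := Finset.univ.filter (fun i => f i = some y0) with hs
    have h2 : 1 < s.card := by omega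
    obtain ⟨i, hi, j, hj, hne⟩ := Finset.one_lt_card.mp h2
    have key : ∀ k, k ∈ s → a k ∈ Y ∧ a k = y0 := by
      intro k hk
      have hfk := (Finset.mem_filter.mp hk).2
      by_cases hy' : a k ∈ Y
      · simp only [hf, if_pos hy', Option.some.injEq] at hfk
        exact ⟨hy', hfk⟩
      · simp only [hf, if_neg hy'] at hfk
        cases hfk
    have hai := key i hi
    have haj := key j hj
    have heq : a i = a j := by rw [hai.2, haj.2]
    have hnotj : a i ∉ B j := by rw [heq]; exact (hA (hmem j)).2
    have hnoti : a j ∉ B i := by rw [← heq]; exact (hA (hmem i)).2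
    rcases lt_or_gt_of_ne hne with hlt' | hlt'
    · exact ⟨i, j, hlt', hnotj, hnoti, Or.inl ⟨heq, hai.1⟩⟩
    · exact ⟨j, i, hlt', hnoti, hnotj, Or.inl ⟨heq.symm, haj.1⟩⟩
end

section
/- For every word w ∈ L, the Parikh vector v = Parikh(w) satisfies |dom(v)| ≤ v(#) + 2, where dom(v) is the set of letters with positive count. Equality holds if and only if all the atom parameters τ_1, ..., τ_{2k+3} of w are pairwise distinct. -/
def rep {α : Type*} (l : List α) (n : ℕ) : List α := (List.replicate n l).flatten

/-- The word (τ₁τ₂)^{n₀} ## (τ₂τ₃τ₄)^{n₁} ## ⋯ ## (τ_{2k}τ_{2k+1}τ_{2k+2})^{n_k}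
    ## (τ_{2k+2}τ_{2k+3})^{n_{k+1}}, with `none` playing the role of the separator #. -/
def Lword {Atoms : Type*} (k : ℕ) (nn : ℕ → ℕ) (τ : ℕ → Atoms) : List (Option Atoms) :=
  rep [some (τ 1), some (τ 2)] (nn 0) ++
  ((List.range k).map (fun i =>
    [none, none] ++
      rep [some (τ (2*i+2)), some (τ (2*i+3)), some (τ (2*i+4))] (nn (i+1)))).flatten ++
  [none, none] ++ rep [some (τ (2*k+2)), some (τ (2*k+3))] (nn (k+1))

lemma rep_count {α : Type*} [BEq α] (l : List α) (n : ℕ) (x : α) :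
    (rep l n).count x = n * l.count x := by
  induction n with
  | zero => simp [rep]
  | succ m ih =>
    simp only [rep, List.replicate_succ, List.flatten_cons, List.count_append] at ih ⊢
    rw [ih]; ring

lemma mem_rep {α : Type*} (l : List α) (n : ℕ) (x : α) :
    x ∈ rep l n ↔ 0 < n ∧ x ∈ l := by
  simp only [rep, List.mem_flatten, List.mem_replicate]
  constructor
  · rintro ⟨m, hm, hx⟩; exact ⟨Nat.pos_of_ne_zero hm.1, hm.2 ▸ hx⟩
  · rintro ⟨hn, hx⟩; exact ⟨l, ⟨Nat.pos_iff_ne_zero.mp hn, rfl⟩, hx⟩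

lemma count_none_Lword {Atoms : Type*} [DecidableEq Atoms] (k : ℕ) (nn : ℕ → ℕ)
    (τ : ℕ → Atoms) : (Lword k nn τ).count (none : Option Atoms) = 2*k+2 := by
  simp only [Lword, List.count_append, List.count_flatten, List.map_map, Function.comp_def,
    rep_count]
  simp [List.count_cons, mul_comm]

lemma mem_Lword {Atoms : Type*} (k : ℕ) (nn : ℕ → ℕ) (τ : ℕ → Atoms)
    (hn : ∀ i, i ≤ k + 1 → 1 ≤ nn i) (x : Option Atoms) :
    x ∈ Lword k nn τ ↔ x = none ∨ ∃ i, 1 ≤ i ∧ i ≤ 2*k+3 ∧ x = some (τ i) := by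
  simp only [Lword, List.mem_append, List.mem_flatten, List.mem_map, List.mem_range,
    mem_rep, List.mem_cons, List.not_mem_nil, or_false]
  constructor
  · rintro (((⟨-, (h2 | h2)⟩ | ⟨l, ⟨a, ha, rfl⟩, hx⟩) | (h | h)) | ⟨-, (h2 | h2)⟩)
    · exact Or.inr ⟨1, le_refl 1, by omega, h2⟩
    · exact Or.inr ⟨2, by omega, by omega, h2⟩
    · simp only [List.mem_append, List.mem_cons, List.not_mem_nil, or_false, mem_rep] at hx
      rcases hx with (h | h) | ⟨-, (h2 | h2 | h2)⟩
      · exact Or.inl h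
      · exact Or.inl h
      · exact Or.inr ⟨2*a+2, by omega, by omega, h2⟩
      · exact Or.inr ⟨2*a+3, by omega, by omega, h2⟩
      · exact Or.inr ⟨2*a+4, by omega, by omega, h2⟩
    · exact Or.inl h
    · exact Or.inl h
    · exact Or.inr ⟨2*k+2, by omega, by omega, h2⟩
    · exact Or.inr ⟨2*k+3, by omega, by omega, h2⟩
  · rintro (rfl | ⟨i, h1, h2, rfl⟩)
    · exact Or.inl (Or.inr (Or.inl rfl))
    · rcases eq_or_lt_of_le h1 with rfl | hi1
      · exact Or.inl (Or.inl (Or.inl ⟨hn 0 (by omega), Or.inl rfl⟩))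
      rcases Nat.lt_or_ge i (2*k+2) with hlt | hge
      · rcases eq_or_lt_of_le (show 2 ≤ i by omega) with rfl | hi2
        · exact Or.inl (Or.inl (Or.inl ⟨hn 0 (by omega), Or.inr rfl⟩))
        obtain ⟨m, hmk, hcase⟩ : ∃ m, m < k ∧ (i = 2*m+2 ∨ i = 2*m+3) :=
          ⟨(i-2)/2, by omega, by omega⟩
        refine Or.inl (Or.inl (Or.inr ⟨_, ⟨m, hmk, rfl⟩, ?_⟩))
        simp only [List.mem_append, List.mem_cons, List.not_mem_nil, or_false, mem_rep]
        refine Or.inr ⟨hn (m+1) (by omega), ?_⟩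
        rcases hcase with rfl | rfl
        · exact Or.inl rfl
        · exact Or.inr (Or.inl rfl)
      · rcases (show i = 2*k+2 ∨ i = 2*k+3 by omega) with rfl | rfl
        · exact Or.inr ⟨hn (k+1) le_rfl, Or.inl rfl⟩
        · exact Or.inr ⟨hn (k+1) le_rfl, Or.inr rfl⟩

theorem dom_le_hash_add_two {Atoms : Type*} [DecidableEq Atoms]
    (k : ℕ) (nn : ℕ → ℕ) (τ : ℕ → Atoms)
    (hn : ∀ i, i ≤ k + 1 → 1 ≤ nn i) :
    {x : Option Atoms | 0 < (Lword k nn τ).count x}.ncard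
        ≤ (Lword k nn τ).count none + 2 ∧
    ({x : Option Atoms | 0 < (Lword k nn τ).count x}.ncard
        = (Lword k nn τ).count none + 2 ↔
      ∀ i j, 1 ≤ i → i ≤ 2*k+3 → 1 ≤ j → j ≤ 2*k+3 → i ≠ j → τ i ≠ τ j) := by
  classical
  set s : Finset ℕ := Finset.Icc 1 (2*k+3) with hs
  set F : Finset (Option Atoms) := insert none (s.image (fun i => some (τ i))) with hF
  have hset : {x : Option Atoms | 0 < (Lword k nn τ).count x} = ↑F := by
    ext x
    simp only [Set.mem_setOf_eq, List.count_pos_iff, mem_Lword k nn τ hn, hF, hs,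
      Finset.coe_insert, Set.mem_insert_iff, Finset.coe_image, Set.mem_image,
      Finset.mem_coe, Finset.mem_Icc]
    constructor
    · rintro (rfl | ⟨i, h1, h2, rfl⟩)
      · exact Or.inl rfl
      · exact Or.inr ⟨i, ⟨h1, h2⟩, rfl⟩
    · rintro (rfl | ⟨i, ⟨h1, h2⟩, rfl⟩)
      · exact Or.inl rfl
      · exact Or.inr ⟨i, h1, h2, rfl⟩
  have hnone : (none : Option Atoms) ∉ s.image (fun i => some (τ i)) := by simp
  have hcardF : F.card = (s.image (fun i => some (τ i))).card + 1 :=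
    Finset.card_insert_of_notMem hnone
  have hscard : s.card = 2*k+3 := by simp [hs]
  have hncard : {x : Option Atoms | 0 < (Lword k nn τ).count x}.ncard = F.card := by
    rw [hset, Set.ncard_coe_finset]
  have hinj : (s.image (fun i => some (τ i))).card = s.card ↔
      Set.InjOn (fun i => some (τ i)) ↑s := Finset.card_image_iff
  have hiff : Set.InjOn (fun i => some (τ i)) ↑s ↔
      ∀ i j, 1 ≤ i → i ≤ 2*k+3 → 1 ≤ j → j ≤ 2*k+3 → i ≠ j → τ i ≠ τ j := by
    constructor
    · intro h i j hi1 hi2 hj1 hj2 hne heq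
      exact hne (h (by simp [hs, Finset.mem_Icc]; omega) (by simp [hs, Finset.mem_Icc]; omega)
        (by simp [heq]))
    · intro h a ha b hb heq
      by_contra hne
      simp only [hs, Finset.coe_Icc, Set.mem_Icc] at ha hb
      exact h a b ha.1 ha.2 hb.1 hb.2 hne (Option.some_injective _ heq)
  have hle : (s.image (fun i => some (τ i))).card ≤ s.card := Finset.card_image_le
  rw [hncard, count_none_Lword]
  constructor
  · omega
  · rw [show 2*k+2+2 = s.card + 1 by omega, hcardF, Nat.add_left_inj, hinj, hiff]
end

section
/- In the interval-tree setting: the union of all intervals associated with labels appearing in any fixed sub-tree of a labeled tree T (satisfying the local intersection property) is itself an interval (i.e., a connected subset of ℝ). -/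
private theorem subtree_union_aux (d : ℕ)
    (I : ℕ × Bool → ℝ × ℝ)
    (hloc : ∀ t q, 1 ≤ t → t ≤ d → q < 2 ^ (t - 1) →
      (Set.Icc (I (q * 2 ^ (d - t), false)).1 (I (q * 2 ^ (d - t), false)).2 ∩
        Set.Icc (I ((q + 1) * 2 ^ (d - t) - 1, true)).1
          (I ((q + 1) * 2 ^ (d - t) - 1, true)).2).Nonempty) :
    ∀ n t q, 1 ≤ t → t ≤ d → q < 2 ^ (t - 1) → d - t = n →
    IsPreconnected
      (⋃ i ∈ Set.Ico (q * 2 ^ (d - t)) ((q + 1) * 2 ^ (d - t)),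
        ⋃ b : Bool, Set.Icc (I (i, b)).1 (I (i, b)).2) := by
  intro n
  induction n with
  | zero =>
    intro t q ht htd hq hdt
    have htd' : t = d := by omega
    obtain ⟨x, hx1, hx2⟩ := hloc t q ht htd hq
    rw [hdt] at *
    simp only [pow_zero, mul_one] at hx1 hx2 ⊢
    have hset : (⋃ i ∈ Set.Ico q (q + 1),
        ⋃ b : Bool, Set.Icc (I (i, b)).1 (I (i, b)).2)
        = Set.Icc (I (q, false)).1 (I (q, false)).2 ∪
          Set.Icc (I (q, true)).1 (I (q, true)).2 := by
      ext y
      simp only [Set.mem_iUnion, Set.mem_Ico, Set.mem_union]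
      constructor
      · rintro ⟨i, ⟨h1, h2⟩, b, hb⟩
        have : i = q := by omega
        subst this
        cases b
        · exact Or.inl hb
        · exact Or.inr hb
      · rintro (h | h)
        · exact ⟨q, ⟨le_refl _, by omega⟩, false, h⟩
        · exact ⟨q, ⟨le_refl _, by omega⟩, true, h⟩
    rw [hset]
    have h1 : q + 1 - 1 = q := by omega
    rw [h1] at hx2
    exact (isPreconnected_Icc).union x hx1 hx2 isPreconnected_Icc
  | succ n ih =>
    intro t q ht htd hq hdt
    have hlt : t < d := by omega
    have hm : d - t = (d - (t + 1)) + 1 := by omega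
    set m := d - (t + 1) with hm'
    have hpow : 2 ^ (d - t) = 2 * 2 ^ m := by rw [hm, pow_succ]; ring
    -- child parameters
    have hq1 : 2 * q < 2 ^ ((t + 1) - 1) := by
      have : 2 ^ t = 2 * 2 ^ (t - 1) := by
        rw [← pow_succ']
        congr 1
        omega
      simpa [this] using by omega
    have hq2 : 2 * q + 1 < 2 ^ ((t + 1) - 1) := by
      have h2 : 2 ^ t = 2 * 2 ^ (t - 1) := by
        rw [← pow_succ']
        congr 1
        omega
      simp only [Nat.add_sub_cancel, h2]
      omega
    have hA := ih (t + 1) (2 * q) (by omega) (by omega) hq1 (by omega)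
    have hB := ih (t + 1) (2 * q + 1) (by omega) (by omega) hq2 (by omega)
    have hdt1 : d - (t + 1) = m := rfl
    rw [hdt1] at hA hB
    -- ranges
    have e1 : 2 * q * 2 ^ m = q * 2 ^ (d - t) := by rw [hpow]; ring
    have e2 : (2 * q + 1 + 1) * 2 ^ m = (q + 1) * 2 ^ (d - t) := by rw [hpow]; ring
    have e3 : (2 * q + 1) * 2 ^ m = q * 2 ^ (d - t) + 2 ^ m := by rw [hpow]; ring
    -- glue point
    obtain ⟨x, hx1, hx2⟩ := hloc t q ht htd hq
    have hmpos : 0 < 2 ^ m := Nat.pow_pos (by omega)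
    -- split the union
    have hsplit : (⋃ i ∈ Set.Ico (q * 2 ^ (d - t)) ((q + 1) * 2 ^ (d - t)),
          ⋃ b : Bool, Set.Icc (I (i, b)).1 (I (i, b)).2)
        = (⋃ i ∈ Set.Ico (2 * q * 2 ^ m) ((2 * q + 1) * 2 ^ m),
            ⋃ b : Bool, Set.Icc (I (i, b)).1 (I (i, b)).2) ∪
          (⋃ i ∈ Set.Ico ((2 * q + 1) * 2 ^ m) ((2 * q + 1 + 1) * 2 ^ m),
            ⋃ b : Bool, Set.Icc (I (i, b)).1 (I (i, b)).2) := by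
      rw [← Set.biUnion_union]
      congr 1
      rw [Set.Ico_union_Ico_eq_Ico, e1, e2]
      · rw [e1, e3]; omega
      · rw [e2, e3, hpow]; nlinarith [hmpos]
    rw [hsplit]
    apply hA.union x _ _ hB
    · -- x in left union
      have hi : q * 2 ^ (d - t) ∈ Set.Ico (2 * q * 2 ^ m) ((2 * q + 1) * 2 ^ m) := by
        rw [Set.mem_Ico, e1, e3]; omega
      exact Set.mem_biUnion hi (Set.mem_iUnion.2 ⟨false, hx1⟩)
    · -- x in right union
      have hi : (q + 1) * 2 ^ (d - t) - 1 ∈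
          Set.Ico ((2 * q + 1) * 2 ^ m) ((2 * q + 1 + 1) * 2 ^ m) := by
        rw [Set.mem_Ico, e2, e3]
        have h4 : q * 2 ^ (d - t) + 2 * 2 ^ m = (q + 1) * 2 ^ (d - t) := by
          rw [hpow]; ring
        omega
      exact Set.mem_biUnion hi (Set.mem_iUnion.2 ⟨true, hx2⟩)

theorem subtree_union_is_interval (d : ℕ) (hd : 1 ≤ d)
    (I : ℕ × Bool → ℝ × ℝ)
    (hIvalid : ∀ l, (I l).1 ≤ (I l).2)
    (hloc : ∀ t q, 1 ≤ t → t ≤ d → q < 2 ^ (t - 1) →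
      (Set.Icc (I (q * 2 ^ (d - t), false)).1 (I (q * 2 ^ (d - t), false)).2 ∩
        Set.Icc (I ((q + 1) * 2 ^ (d - t) - 1, true)).1
          (I ((q + 1) * 2 ^ (d - t) - 1, true)).2).Nonempty)
    (t q : ℕ) (ht : 1 ≤ t) (htd : t ≤ d) (hq : q < 2 ^ (t - 1)) :
    IsPreconnected
      (⋃ i ∈ Set.Ico (q * 2 ^ (d - t)) ((q + 1) * 2 ^ (d - t)),
        ⋃ b : Bool, Set.Icc (I (i, b)).1 (I (i, b)).2) := by
  exact subtree_union_aux d I hloc (d - t) t q ht htd hq rfl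
end
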